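/- Let J ∈ ℝ^{n×n} be skew-symmetric, K ∈ ℝ^{m×n}, and D ∈ ℝ^{m×m} diagonal with positive entries. If M = Kᵀ D K J (equivalently the transpose of the Jacobian in the time-invariant H-DNN), then M is diagonalizable over ℂ provided Kᵀ D K is positive definite (K full column rank). -/

import Mathlib

/-!
With `Q = √P`, which is Hermitian and invertible, `P * J = Q * (Q * J * Q) * Q⁻¹`, and
`Q * J * Q` is skew-Hermitian, so `i • (Q * J * Q)` is Hermitian and hence unitarily
diagonalizable. A real positive definite matrix stays positive definite over `ℂ`: the entrywise
embedding is a star homomorphism, so it preserves positivity, and it preserves invertibility.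
-/

open Matrix
open scoped ComplexOrder

section

variable {n : Type*} [Fintype n] [DecidableEq n]

def StarAlgHom.mapMatrix {R A B : Type*} [CommSemiring R] [Semiring A] [StarRing A]
    [Algebra R A] [Semiring B] [StarRing B] [Algebra R B] (f : A →⋆ₐ[R] B) :
    Matrix n n A →⋆ₐ[R] Matrix n n B :=
  { f.toAlgHom.mapMatrix with map_star' := fun _ => conjTranspose_map f (map_star f) }

namespace Matrix

def IsDiagonalizable {R : Type*} [CommRing R] (A : Matrix n n R) : Prop :=
  ∃ (S : Matrix n n R) (e : n → R), IsUnit S ∧ A = S * diagonal e * S⁻¹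

namespace IsDiagonalizable

variable {R : Type*} [CommRing R] {A : Matrix n n R}

theorem smul (hA : A.IsDiagonalizable) (c : R) : (c • A).IsDiagonalizable := by
  obtain ⟨S, e, hS, rfl⟩ := hA
  exact ⟨S, c • e, hS, by rw [diagonal_smul, Matrix.mul_smul, Matrix.smul_mul]⟩

theorem conj (hA : A.IsDiagonalizable) {Q : Matrix n n R} (hQ : IsUnit Q) :
    (Q * A * Q⁻¹).IsDiagonalizable := by
  obtain ⟨S, e, hS, rfl⟩ := hA
  exact ⟨Q * S, e, hQ.mul hS, by simp only [Matrix.mul_inv_rev, Matrix.mul_assoc]⟩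

end IsDiagonalizable

theorem IsHermitian.isDiagonalizable {𝕜 : Type*} [RCLike 𝕜] {A : Matrix n n 𝕜}
    (hA : A.IsHermitian) : A.IsDiagonalizable := by
  refine ⟨hA.eigenvectorUnitary, RCLike.ofReal ∘ hA.eigenvalues,
    (Unitary.toUnits hA.eigenvectorUnitary).isUnit, ?_⟩
  conv_lhs => rw [hA.spectral_theorem, Unitary.conjStarAlgAut_apply]
  rw [inv_eq_left_inv (Unitary.star_mul_self_of_mem hA.eigenvectorUnitary.2)]

theorem isDiagonalizable_of_conjTranspose_eq_neg {B : Matrix n n ℂ} (hB : Bᴴ = -B) :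
    B.IsDiagonalizable := by
  have hIB : (Complex.I • B).IsHermitian := by
    rw [IsHermitian, conjTranspose_smul, hB, Complex.star_def, Complex.conj_I, neg_smul,
      smul_neg, neg_neg]
  simpa [smul_smul] using hIB.isDiagonalizable.smul (-Complex.I)

theorem PosDef.isDiagonalizable_mul {P J : Matrix n n ℂ} (hP : P.PosDef) (hJ : Jᴴ = -J) :
    (P * J).IsDiagonalizable := by
  open scoped MatrixOrder in
  obtain ⟨Q, hQP, hQ⟩ : ∃ Q : Matrix n n ℂ, Q * Q = P ∧ Q.IsHermitian :=
    ⟨CFC.sqrt P, CFC.sqrt_mul_sqrt_self P hP.posSemidef.nonneg,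
      (CFC.sqrt_nonneg P).posSemidef.isHermitian⟩
  have hQunit : IsUnit Q := isUnit_of_mul_isUnit_left (hQP.symm ▸ hP.isUnit)
  have hQJQ : (Q * J * Q)ᴴ = -(Q * J * Q) := by
    rw [conjTranspose_mul, conjTranspose_mul, hQ.eq, hJ, Matrix.neg_mul, Matrix.mul_neg,
      Matrix.mul_assoc]
  have hsimilar : P * J = Q * (Q * J * Q) * Q⁻¹ := by
    rw [← hQP]
    simp only [Matrix.mul_assoc, mul_nonsing_inv _ ((isUnit_iff_isUnit_det Q).mp hQunit),
      Matrix.mul_one]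
  rw [hsimilar]
  exact (isDiagonalizable_of_conjTranspose_eq_neg hQJQ).conj hQunit

theorem PosDef.map {R 𝕜 𝕜' : Type*} [CommSemiring R] [RCLike 𝕜] [RCLike 𝕜'] [Algebra R 𝕜]
    [Algebra R 𝕜'] {P : Matrix n n 𝕜} (hP : P.PosDef) (f : 𝕜 →⋆ₐ[R] 𝕜') :
    (P.map f).PosDef := by
  open scoped MatrixOrder in
  have hnonneg : 0 ≤ f.mapMatrix (n := n) P := map_nonneg _ hP.posSemidef.nonneg
  exact hnonneg.posSemidef.posDef_iff_isUnit.mpr (hP.isUnit.map (f.mapMatrix (n := n)))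

end Matrix

end

theorem KtDKJ_diagonalizable_general (m n : ℕ)
    (J : Matrix (Fin n) (Fin n) ℝ) (hJ : Jᵀ = -J)
    (K : Matrix (Fin m) (Fin n) ℝ)
    (d : Fin m → ℝ)
    (hP : (Kᵀ * Matrix.diagonal d * K).PosDef) :
    ∃ (S : Matrix (Fin n) (Fin n) ℂ) (e : Fin n → ℂ),
      IsUnit S ∧
      (Kᵀ * Matrix.diagonal d * K * J).map (Complex.ofReal)
        = S * Matrix.diagonal e * S⁻¹ := by
  have hPc : ((Kᵀ * diagonal d * K).map Complex.ofReal).PosDef :=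
    hP.map (RCLike.ofRealStarAlgHom ℂ)
  have hJc : (J.map Complex.ofReal)ᴴ = -J.map Complex.ofReal := by
    rw [← conjTranspose_map _ fun r => (Complex.conj_ofReal r).symm,
      conjTranspose_eq_transpose_of_trivial, hJ, Matrix.map_neg _ Complex.ofReal_neg]
  have hmap : (Kᵀ * diagonal d * K * J).map Complex.ofReal =
      (Kᵀ * diagonal d * K).map Complex.ofReal * J.map Complex.ofReal :=
    Matrix.map_mul (f := Complex.ofRealHom)
  rw [hmap]
  exact hPc.isDiagonalizable_mul hJc

theorem KtDKJ_diagonalizable (m n : ℕ)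
    (J : Matrix (Fin n) (Fin n) ℝ) (hJ : Jᵀ = -J)
    (K : Matrix (Fin m) (Fin n) ℝ)
    (d : Fin m → ℝ) (hd : ∀ i, 0 < d i)
    (hP : (Kᵀ * Matrix.diagonal d * K).PosDef) :
    ∃ (S : Matrix (Fin n) (Fin n) ℂ) (e : Fin n → ℂ),
      IsUnit S ∧
      (Kᵀ * Matrix.diagonal d * K * J).map (Complex.ofReal)
        = S * Matrix.diagonal e * S⁻¹ :=
  KtDKJ_diagonalizable_general m n J hJ K d hP
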